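/- arXiv:math/9902034 — 4 statements merged into one kernel-verified Lean document; each statement's English description precedes it below -/
import Mathlib

section
/- Let ⟨z,w⟩ = Σ_{k=1}^{e} z^k conj(w^k) − Σ_{k=e+1}^{n} z^k conj(w^k) be a nondegenerate Hermitian form on ℂ^n, and let Δ = Σ_{k=1}^{e} ∂²/∂z^k∂z̄^k − Σ_{k=e+1}^{n} ∂²/∂z^k∂z̄^k. Then for any n×n complex matrix A, Δ applied to the polynomial ⟨z,z⟩·⟨Az,z⟩ equals (n+2)⟨Az,z⟩ + Tr(A)·⟨z,z⟩. -/
/-!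
Leibniz's rule splits `Δ(PQ)` into `ΔP · Q + P · ΔQ` plus the cross terms
`Σ ε_k (∂_{z^k} P ∂_{z̄^k} Q + ∂_{z̄^k} P ∂_{z^k} Q)`. For `P = ⟨z,z⟩` we have
`∂_{z^k} P = ε_k z̄^k` and `∂_{z̄^k} P = ε_k z^k`, so since `ε_k² = 1` the cross terms form the
Euler operator `Σ_v x_v ∂_v` applied to `Q`, which multiplies the quadratic form `Q = ⟨Az,z⟩`
by its degree `2`. Finally `Δ⟨Az,z⟩ = Σ ε_k² A_kk = Tr A`, and `Δ⟨z,z⟩ = n` is the case `A = 1`.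
-/

open MvPolynomial

/-- Signature coefficients of the Hermitian form of signature `(e, n-e)`. -/
noncomputable def eps (n e : ℕ) (k : Fin n) : ℂ := if (k : ℕ) < e then 1 else -1

/-- The polynomial `⟨z,z⟩ = Σ ε_k z^k z̄^k`, with `X (Sum.inl k)` playing `z^k`
and `X (Sum.inr k)` playing `z̄^k`. -/
noncomputable def hermPoly (n e : ℕ) : MvPolynomial (Fin n ⊕ Fin n) ℂ :=
  ∑ k : Fin n, C (eps n e k) * X (Sum.inl k) * X (Sum.inr k)

/-- The polynomial `⟨Az,z⟩ = Σ ε_k (Az)^k z̄^k`. -/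
noncomputable def hermPolyA (n e : ℕ) (A : Matrix (Fin n) (Fin n) ℂ) :
    MvPolynomial (Fin n ⊕ Fin n) ℂ :=
  ∑ k : Fin n, C (eps n e k) * (∑ j : Fin n, C (A k j) * X (Sum.inl j)) * X (Sum.inr k)

/-- The signature-`(e, n-e)` Laplacian `Δ = Σ ε_k ∂²/∂z^k ∂z̄^k`. -/
noncomputable def Lap (n e : ℕ) (P : MvPolynomial (Fin n ⊕ Fin n) ℂ) :
    MvPolynomial (Fin n ⊕ Fin n) ℂ :=
  ∑ k : Fin n, C (eps n e k) * pderiv (Sum.inl k) (pderiv (Sum.inr k) P)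

theorem MvPolynomial.pderiv_pderiv_mul {σ R : Type*} [CommSemiring R] (i j : σ)
    (p q : MvPolynomial σ R) :
    pderiv i (pderiv j (p * q)) =
      pderiv i (pderiv j p) * q + pderiv j p * pderiv i q + pderiv i p * pderiv j q +
        p * pderiv i (pderiv j q) := by
  simp only [pderiv_mul, map_add]
  ring

section Signature

variable {n : ℕ} (e : ℕ)

theorem eps_mul_self (k : Fin n) : eps n e k * eps n e k = 1 := by
  unfold eps
  split_ifs <;> norm_num

theorem Lap_mul (p q : MvPolynomial (Fin n ⊕ Fin n) ℂ) :
    Lap n e (p * q) = Lap n e p * q + p * Lap n e q +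
      ∑ k, C (eps n e k) *
        (pderiv (Sum.inr k) p * pderiv (Sum.inl k) q +
          pderiv (Sum.inl k) p * pderiv (Sum.inr k) q) := by
  simp only [Lap, Finset.sum_mul, Finset.mul_sum, ← Finset.sum_add_distrib]
  refine Finset.sum_congr rfl fun k _ => ?_
  rw [pderiv_pderiv_mul]
  ring

theorem hermPolyA_one : hermPolyA n e 1 = hermPoly n e := by
  simp [hermPolyA, hermPoly, Matrix.one_apply]

theorem pderiv_inl_hermPoly (k : Fin n) :
    pderiv (Sum.inl k) (hermPoly n e) = C (eps n e k) * X (Sum.inr k) := by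
  simp [hermPoly, pderiv_X, Pi.single_apply, mul_comm]

theorem pderiv_inr_hermPoly (k : Fin n) :
    pderiv (Sum.inr k) (hermPoly n e) = C (eps n e k) * X (Sum.inl k) := by
  simp [hermPoly, pderiv_X, Pi.single_apply, mul_comm]

theorem pderiv_inr_hermPolyA (A : Matrix (Fin n) (Fin n) ℂ) (k : Fin n) :
    pderiv (Sum.inr k) (hermPolyA n e A) =
      C (eps n e k) * ∑ j, C (A k j) * X (Sum.inl j) := by
  simp [hermPolyA, pderiv_X, Pi.single_apply]

theorem pderiv_inl_pderiv_inr_hermPolyA (A : Matrix (Fin n) (Fin n) ℂ) (k : Fin n) :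
    pderiv (Sum.inl k) (pderiv (Sum.inr k) (hermPolyA n e A)) = C (eps n e k * A k k) := by
  simp [pderiv_inr_hermPolyA, pderiv_X, Pi.single_apply]

theorem Lap_hermPolyA (A : Matrix (Fin n) (Fin n) ℂ) :
    Lap n e (hermPolyA n e A) = C (Matrix.trace A) := by
  simp only [Lap, pderiv_inl_pderiv_inr_hermPolyA, ← map_mul, ← mul_assoc, eps_mul_self, one_mul,
    ← map_sum, Matrix.trace, Matrix.diag_apply]

theorem Lap_hermPoly : Lap n e (hermPoly n e) = C (n : ℂ) := by
  rw [← hermPolyA_one, Lap_hermPolyA, Matrix.trace_one, Fintype.card_fin]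

theorem isHomogeneous_hermPolyA (A : Matrix (Fin n) (Fin n) ℂ) :
    (hermPolyA n e A).IsHomogeneous 2 :=
  IsHomogeneous.sum _ _ _ fun _ _ =>
    ((IsHomogeneous.sum _ _ _ fun _ _ => isHomogeneous_C_mul_X _ _).C_mul _).mul
      (isHomogeneous_X _ _)

theorem sum_eps_mul_pderiv_hermPoly_mul_pderiv {q : MvPolynomial (Fin n ⊕ Fin n) ℂ} {m : ℕ}
    (hq : q.IsHomogeneous m) :
    ∑ k, C (eps n e k) *
        (pderiv (Sum.inr k) (hermPoly n e) * pderiv (Sum.inl k) q +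
          pderiv (Sum.inl k) (hermPoly n e) * pderiv (Sum.inr k) q) = m • q := by
  have hε (k : Fin n) : (C (eps n e k) * C (eps n e k) : MvPolynomial (Fin n ⊕ Fin n) ℂ) = 1 := by
    rw [← map_mul, eps_mul_self, map_one]
  rw [← hq.sum_X_mul_pderiv, Fintype.sum_sum_type, ← Finset.sum_add_distrib]
  refine Finset.sum_congr rfl fun k _ => ?_
  rw [pderiv_inr_hermPoly, pderiv_inl_hermPoly]
  linear_combination (X (Sum.inl k) * pderiv (Sum.inl k) q +
    X (Sum.inr k) * pderiv (Sum.inr k) q) * hε k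

end Signature

theorem stmt0_general (n e : ℕ) (A : Matrix (Fin n) (Fin n) ℂ) :
    Lap n e (hermPoly n e * hermPolyA n e A) =
      C ((n : ℂ) + 2) * hermPolyA n e A + C (Matrix.trace A) * hermPoly n e := by
  rw [Lap_mul, Lap_hermPoly, Lap_hermPolyA,
    sum_eps_mul_pderiv_hermPoly_mul_pderiv e (isHomogeneous_hermPolyA e A), map_add, map_ofNat,
    nsmul_eq_mul]
  push_cast
  ring

/-- `Δ{⟨z,z⟩⟨Az,z⟩} = (n+2)⟨Az,z⟩ + Tr(A)⟨z,z⟩`. -/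
theorem stmt0 (n e : ℕ) (he : e ≤ n) (A : Matrix (Fin n) (Fin n) ℂ) :
    Lap n e (hermPoly n e * hermPolyA n e A) =
      C ((n : ℂ) + 2) * hermPolyA n e A + C (Matrix.trace A) * hermPoly n e :=
  stmt0_general n e A
end

section
/- Let φ_σ be the fractional linear map on ℂ^n × ℂ given by z* = C(z − aw)/(1 + 2i⟨z,a⟩ − w(r + i⟨a,a⟩)), w* = ρw/(1 + 2i⟨z,a⟩ − w(r + i⟨a,a⟩)), where a ∈ ℂ^n, ρ, r ∈ ℝ, ρ ≠ 0, and C ∈ GL(n,ℂ) with ⟨Cz,Cz⟩ = ρ⟨z,z⟩. Writing w = u + iv and v* = Im w*, one has v* − ⟨z*, z*⟩ = (v − ⟨z,z⟩)·ρ·(1+δ)⁻¹·conj(1+δ)⁻¹, where 1+δ = 1 + 2i⟨z,a⟩ − (r + i⟨a,a⟩)w. In particular, φ_σ maps the real hyperquadric {v = ⟨z,z⟩} into itself (where defined). -/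
open Complex

/-- The nondegenerate Hermitian form `⟨z,w⟩ = Σ_{k<e} z^k w̄^k − Σ_{k≥e} z^k w̄^k`. -/
noncomputable def herm (n e : ℕ) (z w : Fin n → ℂ) : ℂ :=
  ∑ k : Fin n, eps n e k * z k * (starRingEnd ℂ) (w k)

lemma herm_conj (n e : ℕ) (z w : Fin n → ℂ) :
    (starRingEnd ℂ) (herm n e z w) = herm n e w z := by
  simp only [herm, map_sum, map_mul, Complex.conj_conj]
  refine Finset.sum_congr rfl fun k _ => ?_
  have h : (starRingEnd ℂ) (eps n e k) = eps n e k := by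
    unfold eps; split <;> simp
  rw [h]; ring

lemma herm_expand (n e : ℕ) (z a : Fin n → ℂ) (w : ℂ) :
    herm n e (fun j => z j - a j * w) (fun j => z j - a j * w)
      = herm n e z z - (starRingEnd ℂ) w * herm n e z a - w * herm n e a z
        + w * (starRingEnd ℂ) w * herm n e a a := by
  simp only [herm, Finset.mul_sum, ← Finset.sum_sub_distrib, ← Finset.sum_add_distrib]
  refine Finset.sum_congr rfl fun k _ => ?_
  simp only [map_sub, map_mul]
  ring

lemma herm_div (n e : ℕ) (f : Fin n → ℂ) (d : ℂ) :
    herm n e (fun i => f i / d) (fun i => f i / d)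
      = herm n e f f * (d⁻¹ * ((starRingEnd ℂ) d)⁻¹) := by
  simp only [herm, div_eq_mul_inv, map_mul, map_inv₀, Finset.sum_mul]
  refine Finset.sum_congr rfl fun k _ => ?_
  ring

lemma key_alg (H A B D R ρc w cw δ cδ : ℂ)
    (hδ : δ = 1 + 2*Complex.I*A - w*(R + Complex.I*D))
    (hcδ : cδ = 1 - 2*Complex.I*B - cw*(R - Complex.I*D))
    (h1 : δ ≠ 0) (h2 : cδ ≠ 0) :
    (ρc*w/δ - ρc*cw/cδ)/(2*Complex.I)
        - ρc*(H - cw*A - w*B + w*cw*D)*(δ⁻¹*cδ⁻¹)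
      = ((w - cw)/(2*Complex.I) - H)*ρc*δ⁻¹*cδ⁻¹ := by
  subst hδ hcδ
  field_simp
  ring

/-- For the fractional linear map `φ_σ` with parameters `(C,a,ρ,r)`, one has
`v* − ⟨z*,z*⟩ = (v − ⟨z,z⟩)·ρ·(1+δ)⁻¹·conj(1+δ)⁻¹` where
`1+δ = 1 + 2i⟨z,a⟩ − (r + i⟨a,a⟩)w`; in particular `φ_σ` maps the hyperquadric
`{Im w = ⟨z,z⟩}` into itself where defined. -/
theorem stmt6 (n e : ℕ) (he : e ≤ n) (a : Fin n → ℂ) (ρ r : ℝ) (hρ : ρ ≠ 0)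
    (Cm : Matrix (Fin n) (Fin n) ℂ) (hCinv : IsUnit Cm)
    (hC : ∀ z : Fin n → ℂ,
      herm n e (Cm.mulVec z) (Cm.mulVec z) = (ρ : ℂ) * herm n e z z)
    (z : Fin n → ℂ) (w : ℂ)
    (δ1 : ℂ)
    (hδ1 : δ1 = 1 + 2 * Complex.I * herm n e z a - w * ((r : ℂ) + Complex.I * herm n e a a))
    (hden : δ1 ≠ 0)
    (zs : Fin n → ℂ)
    (hzs : ∀ i, zs i = Cm.mulVec (fun j => z j - a j * w) i / δ1)
    (ws : ℂ) (hws : ws = (ρ : ℂ) * w / δ1) :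
    ((ws.im : ℂ) - herm n e zs zs
        = ((w.im : ℂ) - herm n e z z) * (ρ : ℂ) * δ1⁻¹ * ((starRingEnd ℂ) δ1)⁻¹)
      ∧ ((w.im : ℂ) = herm n e z z → (ws.im : ℂ) = herm n e zs zs) := by
  have hcne : (starRingEnd ℂ) δ1 ≠ 0 := by
    simpa using hden
  have him : ∀ u : ℂ, (u.im : ℂ) = (u - (starRingEnd ℂ) u) / (2*Complex.I) := by
    intro u
    rw [Complex.sub_conj]
    field_simp
    push_cast
    ring
  have hconjδ : (starRingEnd ℂ) δ1
      = 1 - 2*Complex.I*(herm n e a z) - (starRingEnd ℂ) w * ((r : ℂ) - Complex.I * herm n e a a) := by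
    rw [hδ1]
    simp only [map_sub, map_add, map_mul, map_one, map_ofNat, Complex.conj_I,
      Complex.conj_ofReal, herm_conj]
    ring
  have hzsfun : zs = fun i => Cm.mulVec (fun j => z j - a j * w) i / δ1 := funext hzs
  have hhzs : herm n e zs zs
      = (ρ : ℂ) * (herm n e z z - (starRingEnd ℂ) w * herm n e z a - w * herm n e a z
          + w * (starRingEnd ℂ) w * herm n e a a) * (δ1⁻¹ * ((starRingEnd ℂ) δ1)⁻¹) := by
    rw [hzsfun, herm_div, hC, herm_expand, mul_assoc]
  have hwsc : (starRingEnd ℂ) ws = (ρ : ℂ) * (starRingEnd ℂ) w / (starRingEnd ℂ) δ1 := by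
    rw [hws, map_div₀, map_mul, Complex.conj_ofReal]
  have main : (ws.im : ℂ) - herm n e zs zs
      = ((w.im : ℂ) - herm n e z z) * (ρ : ℂ) * δ1⁻¹ * ((starRingEnd ℂ) δ1)⁻¹ := by
    rw [him ws, him w, hwsc, hws, hhzs]
    exact key_alg (herm n e z z) (herm n e z a) (herm n e a z) (herm n e a a) (r : ℂ)
      (ρ : ℂ) w ((starRingEnd ℂ) w) δ1 ((starRingEnd ℂ) δ1) hδ1 hconjδ hden hcne
  refine ⟨main, fun h => ?_⟩
  have h2 := main
  rw [h, sub_self, zero_mul, zero_mul, zero_mul] at h2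
  exact sub_eq_zero.mp h2
end

section
/- Let q : I → ℝ be smooth with q' > 0, let α ∈ ℝ, and suppose q satisfies q'''/(3q') − (1/2)(q''/q')² + (α²/6)(q'² − 1) = 0. Then q(u) = u is a solution, and more generally for α ≠ 0 the general solution is obtained from Möbius transformations in the variable tan(αu/2) (equivalently, e^{iαq} is a Möbius function of e^{iαu}); in particular the solution set is a 3-parameter family. -/
open Complex
open scoped ContDiff

/-- For the projective-parameter ODE
`q'''/(3q') − (1/2)(q''/q')² + (α²/6)(q'² − 1) = 0`:
(a) `q(u) = u` is a solution for every `α`; and (b) for `α ≠ 0`, any smooth `q` with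
`q' > 0` such that `e^{iαq(u)}` is a Möbius function of `e^{iαu}` (with nonvanishing
denominator and nonzero determinant) is a solution. -/
theorem stmt14 :
    (∀ α : ℝ, ∀ u : ℝ,
      (deriv (deriv (deriv (fun t : ℝ => t))) u) / (3 * deriv (fun t : ℝ => t) u)
        - (1 / 2) * ((deriv (deriv (fun t : ℝ => t)) u) / (deriv (fun t : ℝ => t) u)) ^ 2
        + (α ^ 2 / 6) * ((deriv (fun t : ℝ => t) u) ^ 2 - 1) = 0) ∧
    (∀ α : ℝ, α ≠ 0 → ∀ (A B C D : ℂ), A * D - B * C ≠ 0 →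
      ∀ q : ℝ → ℝ, ContDiff ℝ (⊤ : ℕ∞) q → (∀ u, 0 < deriv q u) →
      (∀ u : ℝ, C * Complex.exp (Complex.I * α * u) + D ≠ 0) →
      (∀ u : ℝ, Complex.exp (Complex.I * α * q u)
          * (C * Complex.exp (Complex.I * α * u) + D)
        = A * Complex.exp (Complex.I * α * u) + B) →
      ∀ u : ℝ,
        (deriv (deriv (deriv q)) u) / (3 * deriv q u)
          - (1 / 2) * ((deriv (deriv q) u) / (deriv q u)) ^ 2
          + (α ^ 2 / 6) * ((deriv q u) ^ 2 - 1) = 0) := by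
  constructor
  · intro α u
    simp
  intro α hα A B C D hdet q hq hpos hden heq u
  have hq1 : ∀ t : ℝ, HasDerivAt q (deriv q t) t := fun t =>
    ((hq.of_le (by simp)).differentiable (by simp : (∞ : WithTop ℕ∞) ≠ 0)).differentiableAt.hasDerivAt
  have hc1 : ContDiff ℝ ∞ (deriv q) := (contDiff_infty_iff_deriv.mp (hq.of_le (by simp))).2
  have hq2 : ∀ t : ℝ, HasDerivAt (deriv q) (deriv (deriv q) t) t := fun t =>
    (hc1.differentiable (by simp)).differentiableAt.hasDerivAt
  have hc2 : ContDiff ℝ ∞ (deriv (deriv q)) := (contDiff_infty_iff_deriv.mp hc1).2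
  have hq3 : ∀ t : ℝ, HasDerivAt (deriv (deriv q)) (deriv (deriv (deriv q)) t) t := fun t =>
    (hc2.differentiable (by simp)).differentiableAt.hasDerivAt
  have hG : ∀ t : ℝ, HasDerivAt (fun s : ℝ => Complex.exp (Complex.I * ↑α * ↑s))
      (Complex.I * ↑α * Complex.exp (Complex.I * ↑α * ↑t)) t := by
    intro t
    have h0 : HasDerivAt (fun s : ℝ => Complex.I * ↑α * (↑s : ℂ)) (Complex.I * ↑α) t := by
      simpa using ((hasDerivAt_id t).ofReal_comp.const_mul (Complex.I * (α : ℂ)))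
    have h1 := h0.cexp
    convert h1 using 1
    ring
  have hF : ∀ t : ℝ, HasDerivAt (fun s : ℝ => Complex.exp (Complex.I * ↑α * ↑(q s)))
      (Complex.I * ↑α * ↑(deriv q t) * Complex.exp (Complex.I * ↑α * ↑(q t))) t := by
    intro t
    have h0 : HasDerivAt (fun s : ℝ => Complex.I * ↑α * (↑(q s) : ℂ))
        (Complex.I * ↑α * ↑(deriv q t)) t := by
      simpa using ((hq1 t).ofReal_comp.const_mul (Complex.I * (α : ℂ)))
    have h1 := h0.cexp
    convert h1 using 1
    ring
  have hIα : Complex.I * (α : ℂ) ≠ 0 :=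
    mul_ne_zero Complex.I_ne_zero (by exact_mod_cast hα)
  -- E1
  have e1 : ∀ t : ℝ, (↑(deriv q t) : ℂ) *
      ((A * Complex.exp (Complex.I * ↑α * ↑t) + B) * (C * Complex.exp (Complex.I * ↑α * ↑t) + D))
      = (A * D - B * C) * Complex.exp (Complex.I * ↑α * ↑t) := by
    intro t
    have hL := (hF t).mul (((hG t).const_mul C).add_const D)
    have hR : HasDerivAt (fun s : ℝ => A * Complex.exp (Complex.I * ↑α * ↑s) + B)
        (A * (Complex.I * ↑α * Complex.exp (Complex.I * ↑α * ↑t))) t :=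
      ((hG t).const_mul A).add_const B
    have hfun : (fun s : ℝ => A * Complex.exp (Complex.I * ↑α * ↑s) + B) =ᶠ[nhds t]
        (fun s : ℝ => Complex.exp (Complex.I * ↑α * ↑(q s))
          * (C * Complex.exp (Complex.I * ↑α * ↑s) + D)) :=
      Filter.Eventually.of_forall fun s => (heq s).symm
    have hval := (hL.congr_of_eventuallyEq hfun).unique hR
    have heqt := heq t
    apply mul_left_cancel₀ hIα
    linear_combination (C * Complex.exp (Complex.I * ↑α * ↑t) + D) * hval
      - (Complex.I * ↑α * ↑(deriv q t) * (C * Complex.exp (Complex.I * ↑α * ↑t) + D)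
          + Complex.I * ↑α * C * Complex.exp (Complex.I * ↑α * ↑t)) * heqt
  -- E2
  have e2 : ∀ t : ℝ, (↑(deriv (deriv q) t) : ℂ) *
        ((A * Complex.exp (Complex.I * ↑α * ↑t) + B) * (C * Complex.exp (Complex.I * ↑α * ↑t) + D))
      + Complex.I * ↑α * ↑(deriv q t) *
        (A * Complex.exp (Complex.I * ↑α * ↑t) * (C * Complex.exp (Complex.I * ↑α * ↑t) + D)
          + C * Complex.exp (Complex.I * ↑α * ↑t) * (A * Complex.exp (Complex.I * ↑α * ↑t) + B))
      = (A * D - B * C) * (Complex.I * ↑α * Complex.exp (Complex.I * ↑α * ↑t)) := by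
    intro t
    have hL := ((hq2 t).ofReal_comp).mul
      ((((hG t).const_mul A).add_const B).mul (((hG t).const_mul C).add_const D))
    have hR : HasDerivAt (fun s : ℝ => (A * D - B * C) * Complex.exp (Complex.I * ↑α * ↑s))
        ((A * D - B * C) * (Complex.I * ↑α * Complex.exp (Complex.I * ↑α * ↑t))) t :=
      (hG t).const_mul (A * D - B * C)
    have hfun : (fun s : ℝ => (A * D - B * C) * Complex.exp (Complex.I * ↑α * ↑s)) =ᶠ[nhds t]
        (fun s : ℝ => (↑(deriv q s) : ℂ) *
          ((A * Complex.exp (Complex.I * ↑α * ↑s) + B) * (C * Complex.exp (Complex.I * ↑α * ↑s) + D))) :=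
      Filter.Eventually.of_forall fun s => (e1 s).symm
    have hval := (hL.congr_of_eventuallyEq hfun).unique hR
    simp only [Pi.mul_apply, Pi.add_apply] at hval
    linear_combination hval
  -- E3 at u
  have e3 : (↑(deriv (deriv (deriv q)) u) : ℂ) *
        ((A * Complex.exp (Complex.I * ↑α * ↑u) + B) * (C * Complex.exp (Complex.I * ↑α * ↑u) + D))
      + 2 * (Complex.I * ↑α) * ↑(deriv (deriv q) u) *
        (A * Complex.exp (Complex.I * ↑α * ↑u) * (C * Complex.exp (Complex.I * ↑α * ↑u) + D)
          + C * Complex.exp (Complex.I * ↑α * ↑u) * (A * Complex.exp (Complex.I * ↑α * ↑u) + B))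
      + (Complex.I * ↑α) ^ 2 * ↑(deriv q u) *
        (A * Complex.exp (Complex.I * ↑α * ↑u) * (C * Complex.exp (Complex.I * ↑α * ↑u) + D)
          + C * Complex.exp (Complex.I * ↑α * ↑u) * (A * Complex.exp (Complex.I * ↑α * ↑u) + B)
          + 2 * A * C * Complex.exp (Complex.I * ↑α * ↑u) ^ 2)
      = (A * D - B * C) * ((Complex.I * ↑α) ^ 2 * Complex.exp (Complex.I * ↑α * ↑u)) := by
    have hX := (((hG u).const_mul A).add_const B).mul (((hG u).const_mul C).add_const D)
    have hW := (((hG u).const_mul A).mul (((hG u).const_mul C).add_const D)).add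
      (((hG u).const_mul C).mul (((hG u).const_mul A).add_const B))
    have hL := (((hq3 u).ofReal_comp).mul hX).add
      ((((hq2 u).ofReal_comp).const_mul (Complex.I * (α : ℂ))).mul hW)
    have hR : HasDerivAt (fun s : ℝ => (A * D - B * C) * (Complex.I * ↑α * Complex.exp (Complex.I * ↑α * ↑s)))
        ((A * D - B * C) * (Complex.I * ↑α * (Complex.I * ↑α * Complex.exp (Complex.I * ↑α * ↑u)))) u :=
      ((hG u).const_mul (Complex.I * (α : ℂ))).const_mul (A * D - B * C)
    have hfun : (fun s : ℝ => (A * D - B * C) * (Complex.I * ↑α * Complex.exp (Complex.I * ↑α * ↑s))) =ᶠ[nhds u]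
        (fun s : ℝ => (↑(deriv (deriv q) s) : ℂ) *
            ((A * Complex.exp (Complex.I * ↑α * ↑s) + B) * (C * Complex.exp (Complex.I * ↑α * ↑s) + D))
          + Complex.I * ↑α * ↑(deriv q s) *
            (A * Complex.exp (Complex.I * ↑α * ↑s) * (C * Complex.exp (Complex.I * ↑α * ↑s) + D)
              + C * Complex.exp (Complex.I * ↑α * ↑s) * (A * Complex.exp (Complex.I * ↑α * ↑s) + B))) :=
      Filter.Eventually.of_forall fun s => (e2 s).symm
    have hval := (hL.congr_of_eventuallyEq hfun).unique hR
    simp only [Pi.mul_apply, Pi.add_apply] at hval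
    linear_combination hval
  -- final algebra
  have E1 := e1 u
  have E2 := e2 u
  clear e1 e2 heq hden hF hG hq1 hq2 hq3 hc1 hc2 hq
  set g : ℂ := Complex.exp (Complex.I * ↑α * ↑u) with hgdef
  set r1 : ℝ := deriv q u with hr1def
  set r2 : ℝ := deriv (deriv q) u with hr2def
  set r3 : ℝ := deriv (deriv (deriv q)) u with hr3def
  have hgne : g ≠ 0 := Complex.exp_ne_zero _
  have hj2 : (Complex.I * (α : ℂ)) ^ 2 = -((α : ℂ) ^ 2) := by
    rw [mul_pow, Complex.I_sq]; ring
  have hxne : (A * g + B) * (C * g + D) ≠ 0 := by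
    intro h
    rw [h, mul_zero] at E1
    exact mul_ne_zero hdet hgne E1.symm
  have hA : (↑r2 : ℂ) * ((A * g + B) * (C * g + D))
      = Complex.I * ↑α * (↑r1 * ((A * g + B) * (C * g + D)
          - (A * g * (C * g + D) + C * g * (A * g + B)))) := by
    linear_combination E2 - Complex.I * (α : ℂ) * E1
  have hB : (↑r3 : ℂ) * ((A * g + B) * (C * g + D))
      = ↑α ^ 2 * ↑r1 * ((A * g * (C * g + D) + C * g * (A * g + B) + 2 * A * C * g ^ 2)
            - (A * g + B) * (C * g + D))
        - 2 * (Complex.I * ↑α) * ↑r2 * (A * g * (C * g + D) + C * g * (A * g + B)) := by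
    linear_combination e3 + (α : ℂ) ^ 2 * E1
      + ((A * D - B * C) * g
          - ↑r1 * (A * g * (C * g + D) + C * g * (A * g + B) + 2 * A * C * g ^ 2)) * hj2
  have h2sq : ((↑r2 : ℂ) * ((A * g + B) * (C * g + D))) ^ 2
      = -(↑α ^ 2) * (↑r1 * ((A * g + B) * (C * g + D)
          - (A * g * (C * g + D) + C * g * (A * g + B)))) ^ 2 := by
    rw [hA]
    linear_combination ((↑r1 : ℂ) * ((A * g + B) * (C * g + D)
      - (A * g * (C * g + D) + C * g * (A * g + B)))) ^ 2 * hj2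
  have h3 : (↑r3 : ℂ) * ((A * g + B) * (C * g + D)) ^ 2
      = ↑α ^ 2 * ↑r1 * ((A * g * (C * g + D) + C * g * (A * g + B) + 2 * A * C * g ^ 2)
            - (A * g + B) * (C * g + D)) * ((A * g + B) * (C * g + D))
        + 2 * ↑α ^ 2 * (A * g * (C * g + D) + C * g * (A * g + B)) * ↑r1
          * ((A * g + B) * (C * g + D) - (A * g * (C * g + D) + C * g * (A * g + B))) := by
    linear_combination ((A * g + B) * (C * g + D)) * hB
      - 2 * Complex.I * ↑α * (A * g * (C * g + D) + C * g * (A * g + B)) * hA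
      + (-(2 * (A * g * (C * g + D) + C * g * (A * g + B)) * ↑r1
          * ((A * g + B) * (C * g + D)
            - (A * g * (C * g + D) + C * g * (A * g + B))))) * hj2
  have hx2 : ((↑r1 : ℂ) * ((A * g + B) * (C * g + D))) ^ 2 = ((A * D - B * C) * g) ^ 2 := by
    rw [E1]
  have Tc : ((2 * r3 * r1 - 3 * r2 ^ 2 + α ^ 2 * r1 ^ 2 * (r1 ^ 2 - 1) : ℝ) : ℂ)
      * ((A * g + B) * (C * g + D)) ^ 2 = 0 := by
    push_cast
    linear_combination 2 * (r1 : ℂ) * h3 - 3 * h2sq + (α : ℂ) ^ 2 * (r1 : ℂ) ^ 2 * hx2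
  have Treal : 2 * r3 * r1 - 3 * r2 ^ 2 + α ^ 2 * r1 ^ 2 * (r1 ^ 2 - 1) = 0 := by
    have h0 := (mul_eq_zero.mp Tc).resolve_right (pow_ne_zero 2 hxne)
    exact_mod_cast h0
  have hr1ne : r1 ≠ 0 := ne_of_gt (hpos u)
  field_simp
  linear_combination 6 * Treal
end

section
/- Let F(z, z̄, u) be real-analytic near 0 ∈ ℂ^n × ℝ with F(0) = 0, F_z(0) = 0, F_{z̄}(0) = 0, and let p(u) be real-analytic with p(0) = 0. Then there exists a unique holomorphic function g(z, w) near 0 satisfying g(0,w) = iF(p(w), p̄(w), w) and g(z,w) − g(0,w) = −2iF(p(w), p̄(w), w) + 2iF(z + p(w), p̄(w), w + (1/2)(g(z,w) − g(0,w))), where p̄(w) denotes the holomorphic extension of conj(p(ū)). Moreover g satisfies g(0,0) = 0, ∂g/∂z(0) = 0, and Re(∂g/∂w(0)) = 0. -/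
open Complex Filter

/-- `g` satisfies, near the origin, the implicit functional equations
`g(0,w) = iF(p(w), p̄(w), w)` and
`g(z,w) − g(0,w) = −2iF(p(w), p̄(w), w) + 2iF(z + p(w), p̄(w), w + ½(g(z,w) − g(0,w)))`.
Here `F` is the polarization of the defining function (second slot playing `z̄`,
third slot playing `u`). -/
def SolvesG (n : ℕ) (F : (Fin n → ℂ) × (Fin n → ℂ) × ℂ → ℂ)
    (p pbar : ℂ → Fin n → ℂ) (g : (Fin n → ℂ) × ℂ → ℂ) : Prop :=
  (∀ᶠ w in nhds (0 : ℂ), g (0, w) = Complex.I * F (p w, pbar w, w)) ∧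
  (∀ᶠ x in nhds (0 : (Fin n → ℂ) × ℂ),
    g x - g (0, x.2)
      = -2 * Complex.I * F (p x.2, pbar x.2, x.2)
        + 2 * Complex.I * F (fun i => x.1 i + p x.2 i, pbar x.2,
            x.2 + (1 / 2) * (g x - g (0, x.2))))

noncomputable section StmtAux

/-- projection `(z,w,y) ↦ w`. -/
def auxW (n : ℕ) : (((Fin n → ℂ) × ℂ) × ℂ) →L[ℂ] ℂ :=
  (ContinuousLinearMap.snd ℂ (Fin n → ℂ) ℂ).comp
    (ContinuousLinearMap.fst ℂ ((Fin n → ℂ) × ℂ) ℂ)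

/-- projection `(z,w,y) ↦ z`. -/
def auxZ (n : ℕ) : (((Fin n → ℂ) × ℂ) × ℂ) →L[ℂ] (Fin n → ℂ) :=
  (ContinuousLinearMap.fst ℂ (Fin n → ℂ) ℂ).comp
    (ContinuousLinearMap.fst ℂ ((Fin n → ℂ) × ℂ) ℂ)

/-- projection `(z,w,y) ↦ y`. -/
def auxY (n : ℕ) : (((Fin n → ℂ) × ℂ) × ℂ) →L[ℂ] ℂ :=
  ContinuousLinearMap.snd ℂ ((Fin n → ℂ) × ℂ) ℂ

/-- first argument map of `Φ`. -/
def auxA (n : ℕ) (p pbar : ℂ → Fin n → ℂ) :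
    (((Fin n → ℂ) × ℂ) × ℂ) → (Fin n → ℂ) × (Fin n → ℂ) × ℂ :=
  fun x => (p x.1.2, pbar x.1.2, x.1.2)

/-- second argument map of `Φ`. -/
def auxB (n : ℕ) (p pbar : ℂ → Fin n → ℂ) :
    (((Fin n → ℂ) × ℂ) × ℂ) → (Fin n → ℂ) × (Fin n → ℂ) × ℂ :=
  fun x => (fun i => x.1.1 i + p x.1.2 i, pbar x.1.2, x.1.2 + (1 / 2) * x.2)

/-- the nonlinear map whose fixed point (in the last variable) defines `h`. -/
def auxPhi (n : ℕ) (F : (Fin n → ℂ) × (Fin n → ℂ) × ℂ → ℂ)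
    (p pbar : ℂ → Fin n → ℂ) : (((Fin n → ℂ) × ℂ) × ℂ) → ℂ :=
  fun x => -2 * Complex.I * F (auxA n p pbar x) + 2 * Complex.I * F (auxB n p pbar x)

/-- the map to invert. -/
def auxPsi (n : ℕ) (F : (Fin n → ℂ) × (Fin n → ℂ) × ℂ → ℂ)
    (p pbar : ℂ → Fin n → ℂ) :
    (((Fin n → ℂ) × ℂ) × ℂ) → (((Fin n → ℂ) × ℂ) × ℂ) :=
  fun x => (x.1, x.2 - auxPhi n F p pbar x)

/-- derivative of `auxA` at `0`. -/
def auxA' (n : ℕ) (p pbar : ℂ → Fin n → ℂ) :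
    (((Fin n → ℂ) × ℂ) × ℂ) →L[ℂ] ((Fin n → ℂ) × (Fin n → ℂ) × ℂ) :=
  ((fderiv ℂ p 0).comp (auxW n)).prod
    (((fderiv ℂ pbar 0).comp (auxW n)).prod (auxW n))

/-- derivative of `auxB` at `0`. -/
def auxB' (n : ℕ) (p pbar : ℂ → Fin n → ℂ) :
    (((Fin n → ℂ) × ℂ) × ℂ) →L[ℂ] ((Fin n → ℂ) × (Fin n → ℂ) × ℂ) :=
  (auxZ n + (fderiv ℂ p 0).comp (auxW n)).prod
    (((fderiv ℂ pbar 0).comp (auxW n)).prod (auxW n + (1 / 2 : ℂ) • auxY n))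

/-- derivative of `auxPhi` at `0`. -/
def auxPhi' (n : ℕ) (L : (Fin n → ℂ) × (Fin n → ℂ) × ℂ →L[ℂ] ℂ)
    (p pbar : ℂ → Fin n → ℂ) : (((Fin n → ℂ) × ℂ) × ℂ) →L[ℂ] ℂ :=
  (-2 * Complex.I) • (L.comp (auxA' n p pbar)) + (2 * Complex.I) • (L.comp (auxB' n p pbar))

end StmtAux

/-- Existence and uniqueness of the holomorphic function `g(z,w)` implicitly defined by
the equations of Lemma 1: if `F` is analytic at `0` with `F(0) = 0` and its differential
at `0` kills the `z` and `z̄` directions (and `F_u(0)` is real), and `p` is analytic with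
`p(0) = 0` (with `p̄` the holomorphic extension of its conjugate), then there is an
analytic `g` near `0` satisfying the equations, with `g(0) = 0`, `∂g/∂z(0) = 0`,
`Re(∂g/∂w(0)) = 0`, and `g` is unique as a germ at `0`. -/
theorem stmt15 (n : ℕ) (F : (Fin n → ℂ) × (Fin n → ℂ) × ℂ → ℂ)
    (L : (Fin n → ℂ) × (Fin n → ℂ) × ℂ →L[ℂ] ℂ)
    (hFan : AnalyticAt ℂ F 0) (hF0 : F 0 = 0)
    (hFd : HasFDerivAt F L 0)
    (hL : ∀ v : (Fin n → ℂ) × (Fin n → ℂ) × ℂ, L v = L (0, 0, v.2.2))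
    (hLreal : (L (0, 0, 1)).im = 0)
    (p pbar : ℂ → Fin n → ℂ)
    (hpan : AnalyticAt ℂ p 0) (hpbaran : AnalyticAt ℂ pbar 0)
    (hp0 : p 0 = 0) (hpbar0 : pbar 0 = 0)
    (hpbar : ∀ w : ℂ, pbar w = fun i => (starRingEnd ℂ) (p ((starRingEnd ℂ) w) i)) :
    ∃ g : (Fin n → ℂ) × ℂ → ℂ,
      AnalyticAt ℂ g 0 ∧ SolvesG n F p pbar g ∧
      g (0, 0) = 0 ∧
      (∀ ζ : Fin n → ℂ, fderiv ℂ g (0, 0) (ζ, 0) = 0) ∧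
      (fderiv ℂ g (0, 0) (0, 1)).re = 0 ∧
      (∀ g₁ : (Fin n → ℂ) × ℂ → ℂ, AnalyticAt ℂ g₁ 0 → SolvesG n F p pbar g₁ →
        g₁ =ᶠ[nhds (0 : (Fin n → ℂ) × ℂ)] g) := by
  classical
  have hLt : ∀ t : ℂ, L (0, 0, t) = t * L (0, 0, 1) := by
    intro t
    have ht : ((0 : Fin n → ℂ), (0 : Fin n → ℂ), t)
        = t • (((0 : Fin n → ℂ), (0 : Fin n → ℂ), (1 : ℂ))) := by simp
    rw [ht, map_smul, smul_eq_mul]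
  have hunit : (1 : ℂ) - Complex.I * L (0, 0, 1) ≠ 0 := by
    intro hcon
    have := congrArg Complex.re hcon
    simp [Complex.sub_re, Complex.mul_re, hLreal] at this
  have hA0 : auxA n p pbar 0 = 0 := by
    simp [auxA, hp0, hpbar0, Prod.mk_zero_zero]
  have hB0 : auxB n p pbar 0 = 0 := by
    have hz : (fun i => (0 : ((Fin n → ℂ) × ℂ) × ℂ).1.1 i + p 0 i) = (0 : Fin n → ℂ) := by
      funext i; simp [hp0]
    simp only [auxB]
    rw [show ((0:((Fin n → ℂ) × ℂ) × ℂ).1.2) = (0:ℂ) from rfl]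
    simp [hz, hp0, hpbar0, Prod.mk_zero_zero]
    exact funext fun i => rfl
  -- analyticity of the building blocks
  have hWan : AnalyticAt ℂ (fun x : ((Fin n → ℂ) × ℂ) × ℂ => x.1.2) 0 :=
    (auxW n).analyticAt 0
  have hpWan : AnalyticAt ℂ (fun x : ((Fin n → ℂ) × ℂ) × ℂ => p x.1.2) 0 :=
    hpan.comp_of_eq hWan rfl
  have hqWan : AnalyticAt ℂ (fun x : ((Fin n → ℂ) × ℂ) × ℂ => pbar x.1.2) 0 :=
    hpbaran.comp_of_eq hWan rfl
  have hAan : AnalyticAt ℂ (auxA n p pbar) 0 :=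
    hpWan.prod (hqWan.prod hWan)
  have hBan : AnalyticAt ℂ (auxB n p pbar) 0 := by
    refine AnalyticAt.prod ?_ (hqWan.prod ?_)
    · exact ((auxZ n).analyticAt 0).add hpWan
    · exact hWan.add (analyticAt_const.mul ((auxY n).analyticAt 0))
  have hFAan : AnalyticAt ℂ (fun x => F (auxA n p pbar x)) 0 :=
    hFan.comp_of_eq hAan hA0
  have hFBan : AnalyticAt ℂ (fun x => F (auxB n p pbar x)) 0 :=
    hFan.comp_of_eq hBan hB0
  have hΦan : AnalyticAt ℂ (auxPhi n F p pbar) 0 :=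
    (analyticAt_const.mul hFAan).add (analyticAt_const.mul hFBan)
  have hΨan : AnalyticAt ℂ (auxPsi n F p pbar) 0 :=
    (((ContinuousLinearMap.fst ℂ ((Fin n → ℂ) × ℂ) ℂ).analyticAt 0).prod
      (((auxY n).analyticAt 0).sub hΦan))
  -- derivatives
  have hp' : HasFDerivAt p (fderiv ℂ p 0) 0 := hpan.differentiableAt.hasFDerivAt
  have hq' : HasFDerivAt pbar (fderiv ℂ pbar 0) 0 := hpbaran.differentiableAt.hasFDerivAt
  have hpW' : HasFDerivAt (fun x : ((Fin n → ℂ) × ℂ) × ℂ => p x.1.2)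
      ((fderiv ℂ p 0).comp (auxW n)) 0 :=
    HasFDerivAt.comp (0 : ((Fin n → ℂ) × ℂ) × ℂ) hp' ((auxW n).hasFDerivAt)
  have hqW' : HasFDerivAt (fun x : ((Fin n → ℂ) × ℂ) × ℂ => pbar x.1.2)
      ((fderiv ℂ pbar 0).comp (auxW n)) 0 :=
    HasFDerivAt.comp (0 : ((Fin n → ℂ) × ℂ) × ℂ) hq' ((auxW n).hasFDerivAt)
  have hA'd : HasFDerivAt (auxA n p pbar) (auxA' n p pbar) 0 :=
    hpW'.prodMk (hqW'.prodMk ((auxW n).hasFDerivAt))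
  have hB'd : HasFDerivAt (auxB n p pbar) (auxB' n p pbar) 0 := by
    refine HasFDerivAt.prodMk ?_ (HasFDerivAt.prodMk hqW' ?_)
    · exact ((auxZ n).hasFDerivAt).add hpW'
    · exact ((auxW n).hasFDerivAt).add (((auxY n).hasFDerivAt).const_mul (1 / 2 : ℂ))
  have hFdA : HasFDerivAt F L (auxA n p pbar 0) := hA0.symm ▸ hFd
  have hFdB : HasFDerivAt F L (auxB n p pbar 0) := hB0.symm ▸ hFd
  have hΦ'd : HasFDerivAt (auxPhi n F p pbar) (auxPhi' n L p pbar) 0 :=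
    ((HasFDerivAt.comp 0 hFdA hA'd).const_mul (-2 * Complex.I)).add
      ((HasFDerivAt.comp 0 hFdB hB'd).const_mul (2 * Complex.I))
  have hΦ'app : ∀ v : ((Fin n → ℂ) × ℂ) × ℂ,
      auxPhi' n L p pbar v = Complex.I * L (0, 0, 1) * v.2 := by
    intro v
    have h1 : L ((auxA' n p pbar) v) = v.1.2 * L (0, 0, 1) := by
      rw [hL ((auxA' n p pbar) v), hLt]
      rfl
    have h2 : L ((auxB' n p pbar) v) = (v.1.2 + 1 / 2 * v.2) * L (0, 0, 1) := by
      have e2 : ((auxB' n p pbar) v).2.2 = v.1.2 + 1 / 2 * v.2 := by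
        simp [auxB', auxW, auxY, smul_eq_mul]
      rw [hL ((auxB' n p pbar) v), hLt, e2]
    simp only [auxPhi', ContinuousLinearMap.add_apply, ContinuousLinearMap.smul_apply,
      ContinuousLinearMap.comp_apply, h1, h2, smul_eq_mul]
    ring
  -- the invertible derivative of Ψ at 0
  set Ψe : ((((Fin n → ℂ) × ℂ) × ℂ) ≃L[ℂ] (((Fin n → ℂ) × ℂ) × ℂ)) :=
    (ContinuousLinearEquiv.refl ℂ ((Fin n → ℂ) × ℂ)).prodCongr
      (ContinuousLinearEquiv.unitsEquivAut ℂ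
        (Units.mk0 ((1 : ℂ) - Complex.I * L (0, 0, 1)) hunit)) with hΨedef
  have hΨeapp : ∀ v : ((Fin n → ℂ) × ℂ) × ℂ,
      (Ψe : (((Fin n → ℂ) × ℂ) × ℂ) →L[ℂ] (((Fin n → ℂ) × ℂ) × ℂ)) v
        = (v.1, v.2 * ((1 : ℂ) - Complex.I * L (0, 0, 1))) := by
    intro v
    obtain ⟨v1, v2⟩ := v
    simp only [hΨedef]
    simp [ContinuousLinearEquiv.unitsEquivAut_apply]
  have hΨd : HasFDerivAt (auxPsi n F p pbar)
      (Ψe : (((Fin n → ℂ) × ℂ) × ℂ) →L[ℂ] (((Fin n → ℂ) × ℂ) × ℂ)) 0 := by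
    have hD : HasFDerivAt (auxPsi n F p pbar)
        ((ContinuousLinearMap.fst ℂ ((Fin n → ℂ) × ℂ) ℂ).prod
          (auxY n - auxPhi' n L p pbar)) 0 :=
      (ContinuousLinearMap.fst ℂ ((Fin n → ℂ) × ℂ) ℂ).hasFDerivAt.prodMk
        (((auxY n).hasFDerivAt).sub hΦ'd)
    have heq : ((ContinuousLinearMap.fst ℂ ((Fin n → ℂ) × ℂ) ℂ).prod
          (auxY n - auxPhi' n L p pbar))
        = (Ψe : (((Fin n → ℂ) × ℂ) × ℂ) →L[ℂ] (((Fin n → ℂ) × ℂ) × ℂ)) := by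
      apply ContinuousLinearMap.ext
      intro v
      rw [hΨeapp v]
      refine Prod.ext rfl ?_
      simp only [ContinuousLinearMap.prod_apply, ContinuousLinearMap.sub_apply, hΦ'app,
        auxY, ContinuousLinearMap.coe_snd']
      ring
    convert hD using 1
    exact heq.symm
  -- the partial homeomorphism and its analytic inverse
  have hΨcd : ContDiffAt ℂ ⊤ (auxPsi n F p pbar) 0 := hΨan.contDiffAt
  set Ψph := hΨcd.toOpenPartialHomeomorph (auxPsi n F p pbar) hΨd (by simp) with hΨphdef
  have hΨcoe : ⇑Ψph = auxPsi n F p pbar := by rw [hΨphdef]; rfl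
  have hmemsrc : (0 : ((Fin n → ℂ) × ℂ) × ℂ) ∈ Ψph.source :=
    hΨcd.mem_toOpenPartialHomeomorph_source hΨd (by simp)
  have hΦ0 : auxPhi n F p pbar 0 = 0 := by
    simp [auxPhi, hA0, hB0, hF0]
  have hΨ0 : auxPsi n F p pbar 0 = 0 := by
    simp [auxPsi, hΦ0, Prod.mk_zero_zero]
  have hmemtgt : (0 : ((Fin n → ℂ) × ℂ) × ℂ) ∈ Ψph.target := by
    rw [hΨphdef]
    have h2 := hΨcd.image_mem_toOpenPartialHomeomorph_target hΨd (by simp)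
    rwa [hΨ0] at h2
  have hsymm_an : AnalyticAt ℂ Ψph.symm 0 := by
    have hfd : fderiv ℂ Ψph 0
        = (Ψe : (((Fin n → ℂ) × ℂ) × ℂ) →L[ℂ] (((Fin n → ℂ) × ℂ) × ℂ)) := by
      rw [hΨcoe]; exact hΨd.fderiv
    have h2 := Ψph.analyticAt_symm' hmemsrc (by rw [hΨcoe]; exact hΨan) hfd
    rw [hΨcoe] at h2
    rwa [hΨ0] at h2
  -- the implicit function h
  set h : ((Fin n → ℂ) × ℂ) → ℂ := fun x => (Ψph.symm (x, 0)).2 with hhdef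
  have hhan : AnalyticAt ℂ h 0 := by
    rw [hhdef]
    have hjan : AnalyticAt ℂ
        (fun x : (Fin n → ℂ) × ℂ => ((x, 0) : ((Fin n → ℂ) × ℂ) × ℂ)) 0 :=
      (ContinuousLinearMap.inl ℂ ((Fin n → ℂ) × ℂ) ℂ).analyticAt 0
    exact ((ContinuousLinearMap.snd ℂ ((Fin n → ℂ) × ℂ) ℂ).analyticAt _).comp
      (hsymm_an.comp_of_eq hjan rfl)
  have hsymm00 : Ψph.symm 0 = 0 := by
    have := Ψph.left_inv hmemsrc
    rw [hΨcoe, hΨ0] at this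
    exact this
  have hh00 : h (0, 0) = 0 := by
    simp only [hhdef]
    rw [show (((0 : Fin n → ℂ), (0 : ℂ)), (0 : ℂ))
      = (0 : ((Fin n → ℂ) × ℂ) × ℂ) from rfl, hsymm00]
    rfl
  have hsrc_ev : ∀ᶠ y in nhds (0 : ((Fin n → ℂ) × ℂ) × ℂ), y ∈ Ψph.source :=
    Ψph.open_source.mem_nhds hmemsrc
  have htgt_ev : ∀ᶠ y in nhds (0 : ((Fin n → ℂ) × ℂ) × ℂ), y ∈ Ψph.target :=
    Ψph.open_target.mem_nhds hmemtgt
  have hjtendsto : Filter.Tendsto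
      (fun x : (Fin n → ℂ) × ℂ => ((x, 0) : ((Fin n → ℂ) × ℂ) × ℂ))
      (nhds 0) (nhds 0) := by
    have hco : Continuous
        (fun x : (Fin n → ℂ) × ℂ => ((x, 0) : ((Fin n → ℂ) × ℂ) × ℂ)) :=
      continuous_id.prodMk continuous_const
    simpa [Prod.mk_zero_zero] using hco.tendsto 0
  have hmain : ∀ᶠ x in nhds (0 : (Fin n → ℂ) × ℂ),
      Ψph.symm (x, 0) = (x, h x) ∧ (x, h x) ∈ Ψph.source
        ∧ h x = auxPhi n F p pbar (x, h x) := by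
    filter_upwards [hjtendsto.eventually htgt_ev] with x hx
    have hri : auxPsi n F p pbar (Ψph.symm (x, 0)) = (x, 0) := by
      have := Ψph.right_inv hx
      rwa [hΨcoe] at this
    have hfst : (Ψph.symm (x, 0)).1 = x := by
      have h1 : (auxPsi n F p pbar (Ψph.symm (x, 0))).1 = (Ψph.symm (x, 0)).1 := rfl
      rw [hri] at h1
      exact h1.symm
    have hsy : Ψph.symm (x, 0) = (x, h x) := by
      simp only [hhdef]
      exact Prod.ext hfst rfl
    refine ⟨hsy, ?_, ?_⟩
    · have := Ψph.map_target hx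
      rwa [hsy] at this
    · have h2 := congrArg Prod.snd hri
      rw [hsy] at h2
      have h3 : h x - auxPhi n F p pbar (x, h x) = 0 := h2
      exact sub_eq_zero.mp h3
  have hzero : ∀ᶠ w in nhds (0 : ℂ), h (0, w) = 0 := by
    have hco : Continuous
        (fun w : ℂ => ((((0 : Fin n → ℂ), w), (0 : ℂ)) : ((Fin n → ℂ) × ℂ) × ℂ)) :=
      ((continuous_const.prodMk continuous_id).prodMk continuous_const)
    have htd : Filter.Tendsto
        (fun w : ℂ => ((((0 : Fin n → ℂ), w), (0 : ℂ)) : ((Fin n → ℂ) × ℂ) × ℂ))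
        (nhds 0) (nhds 0) := by
      simpa [Prod.mk_zero_zero] using hco.tendsto 0
    filter_upwards [htd.eventually hsrc_ev] with w hw
    have hΦw : auxPhi n F p pbar (((0 : Fin n → ℂ), w), 0) = 0 := by
      have hBw : auxB n p pbar (((0 : Fin n → ℂ), w), 0) = (p w, pbar w, w) := by
        refine Prod.ext ?_ (Prod.ext rfl ?_)
        · show (fun i => ((((0 : Fin n → ℂ), w), (0 : ℂ)) :
            ((Fin n → ℂ) × ℂ) × ℂ).1.1 i + p w i) = p w
          funext i; simp
        · show w + 1 / 2 * 0 = w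
          ring
      have hAw : auxA n p pbar (((0 : Fin n → ℂ), w), 0) = (p w, pbar w, w) := rfl
      simp only [auxPhi, hAw, hBw]
      ring
    have hΨw : auxPsi n F p pbar (((0 : Fin n → ℂ), w), 0) = (((0 : Fin n → ℂ), w), 0) := by
      show ((((0 : Fin n → ℂ), w) : (Fin n → ℂ) × ℂ),
        (0:ℂ) - auxPhi n F p pbar (((0 : Fin n → ℂ), w), 0)) = _
      rw [hΦw]; norm_num
    have hli := Ψph.left_inv hw
    rw [hΨcoe, hΨw] at hli
    simp only [hhdef]
    rw [hli]
  have hz2 : ∀ᶠ x : (Fin n → ℂ) × ℂ in nhds 0, h (0, x.2) = 0 :=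
    (continuous_snd.tendsto (0 : (Fin n → ℂ) × ℂ)).eventually hzero
  -- the solution g
  set g : ((Fin n → ℂ) × ℂ) → ℂ :=
    fun x => Complex.I * F (p x.2, pbar x.2, x.2) + h x with hgdef
  have hinner_an : AnalyticAt ℂ (fun x : (Fin n → ℂ) × ℂ =>
      ((p x.2, pbar x.2, x.2) : (Fin n → ℂ) × (Fin n → ℂ) × ℂ)) 0 := by
    have h1 : AnalyticAt ℂ (fun x : (Fin n → ℂ) × ℂ => p x.2) 0 :=
      hpan.comp_of_eq ((ContinuousLinearMap.snd ℂ (Fin n → ℂ) ℂ).analyticAt 0) rfl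
    have h2 : AnalyticAt ℂ (fun x : (Fin n → ℂ) × ℂ => pbar x.2) 0 :=
      hpbaran.comp_of_eq ((ContinuousLinearMap.snd ℂ (Fin n → ℂ) ℂ).analyticAt 0) rfl
    exact h1.prod (h2.prod ((ContinuousLinearMap.snd ℂ (Fin n → ℂ) ℂ).analyticAt 0))
  have hinner0 : ((p (0 : (Fin n → ℂ) × ℂ).2, pbar (0 : (Fin n → ℂ) × ℂ).2,
      (0 : (Fin n → ℂ) × ℂ).2) : (Fin n → ℂ) × (Fin n → ℂ) × ℂ) = 0 := by
    rw [show ((0 : (Fin n → ℂ) × ℂ)).2 = (0:ℂ) from rfl]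
    simp [hp0, hpbar0, Prod.mk_zero_zero]
  have hFg_an : AnalyticAt ℂ (fun x : (Fin n → ℂ) × ℂ =>
      F (p x.2, pbar x.2, x.2)) 0 :=
    hFan.comp_of_eq hinner_an hinner0
  have hgan : AnalyticAt ℂ g 0 := by
    rw [hgdef]
    exact (analyticAt_const.mul hFg_an).add hhan
  -- derivative computations for g
  have hp2' : HasFDerivAt (fun x : (Fin n → ℂ) × ℂ => p x.2)
      ((fderiv ℂ p 0).comp (ContinuousLinearMap.snd ℂ (Fin n → ℂ) ℂ)) 0 :=
    HasFDerivAt.comp (0 : (Fin n → ℂ) × ℂ) hp'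
      ((ContinuousLinearMap.snd ℂ (Fin n → ℂ) ℂ).hasFDerivAt)
  have hq2' : HasFDerivAt (fun x : (Fin n → ℂ) × ℂ => pbar x.2)
      ((fderiv ℂ pbar 0).comp (ContinuousLinearMap.snd ℂ (Fin n → ℂ) ℂ)) 0 :=
    HasFDerivAt.comp (0 : (Fin n → ℂ) × ℂ) hq'
      ((ContinuousLinearMap.snd ℂ (Fin n → ℂ) ℂ).hasFDerivAt)
  have hinner_d : HasFDerivAt (fun x : (Fin n → ℂ) × ℂ =>
      ((p x.2, pbar x.2, x.2) : (Fin n → ℂ) × (Fin n → ℂ) × ℂ))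
      (((fderiv ℂ p 0).comp (ContinuousLinearMap.snd ℂ (Fin n → ℂ) ℂ)).prod
        (((fderiv ℂ pbar 0).comp (ContinuousLinearMap.snd ℂ (Fin n → ℂ) ℂ)).prod
          (ContinuousLinearMap.snd ℂ (Fin n → ℂ) ℂ))) 0 :=
    hp2'.prodMk (hq2'.prodMk ((ContinuousLinearMap.snd ℂ (Fin n → ℂ) ℂ).hasFDerivAt))
  have hFd0 : HasFDerivAt F L ((p (0 : (Fin n → ℂ) × ℂ).2, pbar (0 : (Fin n → ℂ) × ℂ).2,
      (0 : (Fin n → ℂ) × ℂ).2) : (Fin n → ℂ) × (Fin n → ℂ) × ℂ) := hinner0.symm ▸ hFd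
  have hG0d : HasFDerivAt (fun x : (Fin n → ℂ) × ℂ =>
      Complex.I * F (p x.2, pbar x.2, x.2))
      (Complex.I • (L.comp
        (((fderiv ℂ p 0).comp (ContinuousLinearMap.snd ℂ (Fin n → ℂ) ℂ)).prod
          (((fderiv ℂ pbar 0).comp (ContinuousLinearMap.snd ℂ (Fin n → ℂ) ℂ)).prod
            (ContinuousLinearMap.snd ℂ (Fin n → ℂ) ℂ))))) 0 :=
    (HasFDerivAt.comp 0 hFd0 hinner_d).const_mul Complex.I
  have hh'd : HasFDerivAt h (fderiv ℂ h 0) 0 := hhan.differentiableAt.hasFDerivAt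
  have hkd : HasFDerivAt (fun x : (Fin n → ℂ) × ℂ =>
      ((x, h x) : ((Fin n → ℂ) × ℂ) × ℂ))
      ((ContinuousLinearMap.id ℂ ((Fin n → ℂ) × ℂ)).prod (fderiv ℂ h 0)) 0 :=
    (hasFDerivAt_id 0).prodMk hh'd
  have hk0 : ((fun x : (Fin n → ℂ) × ℂ => ((x, h x) : ((Fin n → ℂ) × ℂ) × ℂ)) 0) = 0 := by
    show (((0 : (Fin n → ℂ) × ℂ), h 0) : ((Fin n → ℂ) × ℂ) × ℂ) = 0
    rw [show h 0 = 0 from hh00]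
    rfl
  have hΦ'd0 : HasFDerivAt (auxPhi n F p pbar) (auxPhi' n L p pbar)
      ((fun x : (Fin n → ℂ) × ℂ => ((x, h x) : ((Fin n → ℂ) × ℂ) × ℂ)) 0) :=
    hk0.symm ▸ hΦ'd
  have hΦk : HasFDerivAt (fun x : (Fin n → ℂ) × ℂ => auxPhi n F p pbar (x, h x))
      ((auxPhi' n L p pbar).comp
        ((ContinuousLinearMap.id ℂ ((Fin n → ℂ) × ℂ)).prod (fderiv ℂ h 0))) 0 :=
    HasFDerivAt.comp (g := auxPhi n F p pbar) (g' := auxPhi' n L p pbar) 0 hΦ'd0 hkd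
  have hev : h =ᶠ[nhds (0 : (Fin n → ℂ) × ℂ)]
      (fun x => auxPhi n F p pbar (x, h x)) := by
    filter_upwards [hmain] with x hm using hm.2.2
  have hh'd2 : HasFDerivAt h
      ((auxPhi' n L p pbar).comp
        ((ContinuousLinearMap.id ℂ ((Fin n → ℂ) × ℂ)).prod (fderiv ℂ h 0))) 0 :=
    hΦk.congr_of_eventuallyEq hev
  have huniqd : fderiv ℂ h 0 = (auxPhi' n L p pbar).comp
      ((ContinuousLinearMap.id ℂ ((Fin n → ℂ) × ℂ)).prod (fderiv ℂ h 0)) :=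
    hh'd.unique hh'd2
  have hDh0 : ∀ v : (Fin n → ℂ) × ℂ, fderiv ℂ h 0 v = 0 := by
    intro v
    have h1 : fderiv ℂ h 0 v = Complex.I * L (0, 0, 1) * (fderiv ℂ h 0 v) := by
      conv_lhs => rw [huniqd]
      rw [ContinuousLinearMap.comp_apply, hΦ'app]
      rfl
    have h2 : ((1 : ℂ) - Complex.I * L (0, 0, 1)) * (fderiv ℂ h 0 v) = 0 := by
      have : fderiv ℂ h 0 v - Complex.I * L (0, 0, 1) * (fderiv ℂ h 0 v) = 0 :=
        sub_eq_zero.mpr h1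
      calc ((1 : ℂ) - Complex.I * L (0, 0, 1)) * (fderiv ℂ h 0 v)
          = fderiv ℂ h 0 v - Complex.I * L (0, 0, 1) * (fderiv ℂ h 0 v) := by ring
        _ = 0 := this
    exact (mul_eq_zero.mp h2).resolve_left hunit
  have hgd : HasFDerivAt g
      ((Complex.I • (L.comp
        (((fderiv ℂ p 0).comp (ContinuousLinearMap.snd ℂ (Fin n → ℂ) ℂ)).prod
          (((fderiv ℂ pbar 0).comp (ContinuousLinearMap.snd ℂ (Fin n → ℂ) ℂ)).prod
            (ContinuousLinearMap.snd ℂ (Fin n → ℂ) ℂ)))))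
        + fderiv ℂ h 0) 0 := by
    rw [hgdef]
    exact hG0d.add hh'd
  have hfg : fderiv ℂ g (0, 0)
      = (Complex.I • (L.comp
        (((fderiv ℂ p 0).comp (ContinuousLinearMap.snd ℂ (Fin n → ℂ) ℂ)).prod
          (((fderiv ℂ pbar 0).comp (ContinuousLinearMap.snd ℂ (Fin n → ℂ) ℂ)).prod
            (ContinuousLinearMap.snd ℂ (Fin n → ℂ) ℂ)))))
        + fderiv ℂ h 0 := hgd.fderiv
  -- finish
  refine ⟨g, hgan, ⟨?_, ?_⟩, ?_, ?_, ?_, ?_⟩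
  · -- first equation
    filter_upwards [hzero] with w hw
    show Complex.I * F (p (((0 : Fin n → ℂ), w) : (Fin n → ℂ) × ℂ).2,
        pbar (((0 : Fin n → ℂ), w) : (Fin n → ℂ) × ℂ).2,
        (((0 : Fin n → ℂ), w) : (Fin n → ℂ) × ℂ).2) + h ((0 : Fin n → ℂ), w)
      = Complex.I * F (p w, pbar w, w)
    rw [hw, add_zero]
  · -- second equation
    filter_upwards [hz2, hmain] with x hx hm
    have hgg : g x - g (0, x.2) = h x := by
      show (Complex.I * F (p x.2, pbar x.2, x.2) + h x)
        - (Complex.I * F (p (((0 : Fin n → ℂ), x.2) : (Fin n → ℂ) × ℂ).2,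
            pbar (((0 : Fin n → ℂ), x.2) : (Fin n → ℂ) × ℂ).2,
            (((0 : Fin n → ℂ), x.2) : (Fin n → ℂ) × ℂ).2) + h ((0 : Fin n → ℂ), x.2)) = h x
      rw [hx]
      ring
    rw [hgg]
    exact hm.2.2
  · -- value at 0
    show Complex.I * F (p (((0 : Fin n → ℂ), (0:ℂ)) : (Fin n → ℂ) × ℂ).2,
        pbar (((0 : Fin n → ℂ), (0:ℂ)) : (Fin n → ℂ) × ℂ).2,
        (((0 : Fin n → ℂ), (0:ℂ)) : (Fin n → ℂ) × ℂ).2) + h ((0 : Fin n → ℂ), (0:ℂ)) = 0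
    rw [show (((0 : Fin n → ℂ), (0:ℂ)) : (Fin n → ℂ) × ℂ).2 = (0:ℂ) from rfl]
    rw [hp0, hpbar0, hh00]
    rw [show ((0 : Fin n → ℂ), (0 : Fin n → ℂ), (0 : ℂ))
      = (0 : (Fin n → ℂ) × (Fin n → ℂ) × ℂ) from rfl, hF0]
    ring
  · -- z-derivative at 0
    intro ζ
    rw [hfg]
    rw [ContinuousLinearMap.add_apply, ContinuousLinearMap.smul_apply,
      ContinuousLinearMap.comp_apply, hDh0, add_zero]
    rw [hL, hLt]
    rw [show ((((fderiv ℂ p 0).comp (ContinuousLinearMap.snd ℂ (Fin n → ℂ) ℂ)).prod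
      (((fderiv ℂ pbar 0).comp (ContinuousLinearMap.snd ℂ (Fin n → ℂ) ℂ)).prod
        (ContinuousLinearMap.snd ℂ (Fin n → ℂ) ℂ))) ((ζ, 0) : (Fin n → ℂ) × ℂ)).2.2
        = (0 : ℂ) from rfl]
    simp
  · -- real part of w-derivative at 0
    rw [hfg]
    rw [ContinuousLinearMap.add_apply, ContinuousLinearMap.smul_apply,
      ContinuousLinearMap.comp_apply, hDh0, add_zero]
    rw [hL, hLt]
    rw [show ((((fderiv ℂ p 0).comp (ContinuousLinearMap.snd ℂ (Fin n → ℂ) ℂ)).prod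
      (((fderiv ℂ pbar 0).comp (ContinuousLinearMap.snd ℂ (Fin n → ℂ) ℂ)).prod
        (ContinuousLinearMap.snd ℂ (Fin n → ℂ) ℂ))) ((0, 1) : (Fin n → ℂ) × ℂ)).2.2
        = (1 : ℂ) from rfl]
    simp [Complex.mul_re, Complex.I_re, Complex.I_im, hLreal]
  · -- uniqueness
    intro g₁ hg₁an hg₁
    obtain ⟨e1, e2⟩ := hg₁
    have hg₁c : ContinuousAt g₁ 0 := hg₁an.continuousAt
    have hc2 : ContinuousAt (fun x : (Fin n → ℂ) × ℂ => g₁ (0, x.2)) 0 :=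
      ContinuousAt.comp (g := g₁) hg₁c
        ((continuous_const.prodMk continuous_snd).continuousAt)
    have htend : Filter.Tendsto
        (fun x : (Fin n → ℂ) × ℂ =>
          ((x, g₁ x - g₁ (0, x.2)) : ((Fin n → ℂ) × ℂ) × ℂ))
        (nhds 0) (nhds 0) := by
      have hca : ContinuousAt (fun x : (Fin n → ℂ) × ℂ =>
          ((x, g₁ x - g₁ (0, x.2)) : ((Fin n → ℂ) × ℂ) × ℂ)) 0 :=
        continuousAt_id.prodMk (hg₁c.sub hc2)
      have hval : ((fun x : (Fin n → ℂ) × ℂ =>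
          ((x, g₁ x - g₁ (0, x.2)) : ((Fin n → ℂ) × ℂ) × ℂ)) 0) = 0 := by
        show (((0 : (Fin n → ℂ) × ℂ), g₁ 0 - g₁ (0, (0 : (Fin n → ℂ) × ℂ).2))
          : ((Fin n → ℂ) × ℂ) × ℂ) = 0
        rw [show ((0 : (Fin n → ℂ) × ℂ)).2 = (0:ℂ) from rfl]
        rw [show (((0 : Fin n → ℂ), (0:ℂ)) : (Fin n → ℂ) × ℂ)
          = (0 : (Fin n → ℂ) × ℂ) from rfl]
        rw [sub_self]
        rfl
      rw [← hval]
      exact hca.tendsto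
    have he1' : ∀ᶠ x : (Fin n → ℂ) × ℂ in nhds 0,
        g₁ (0, x.2) = Complex.I * F (p x.2, pbar x.2, x.2) :=
      (continuous_snd.tendsto (0 : (Fin n → ℂ) × ℂ)).eventually e1
    filter_upwards [htend.eventually hsrc_ev, e2, he1', hmain, hz2]
      with x hx1 hx2 hx3 hm hzx
    obtain ⟨hsy, hsrcx, hfix⟩ := hm
    have hΨ1 : auxPsi n F p pbar (x, g₁ x - g₁ (0, x.2)) = (x, 0) := by
      refine Prod.ext rfl ?_
      show (g₁ x - g₁ (0, x.2)) - auxPhi n F p pbar (x, g₁ x - g₁ (0, x.2)) = 0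
      rw [sub_eq_zero]
      exact hx2
    have hΨ2 : auxPsi n F p pbar (x, h x) = (x, 0) := by
      refine Prod.ext rfl ?_
      show h x - auxPhi n F p pbar (x, h x) = 0
      rw [sub_eq_zero]
      exact hfix
    have hinj : ((x, g₁ x - g₁ (0, x.2)) : ((Fin n → ℂ) × ℂ) × ℂ) = (x, h x) := by
      apply Ψph.injOn hx1 hsrcx
      rw [hΨcoe, hΨ1, hΨ2]
    have hval : g₁ x - g₁ (0, x.2) = h x := congrArg Prod.snd hinj
    have hgx : g₁ x = g₁ (0, x.2) + h x := by rw [← hval]; ring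
    rw [hgx, hx3]
end
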